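/- arXiv:1612.07915 — 2 statements merged into one kernel-verified Lean document; each statement's English description precedes it below -/
import Mathlib

section
/- Let P = P_0 + U be a polyhedral set in ℝ^d where U is a linear subspace and P_0 is a polyhedral set contained in an affine subspace whose direction space is orthogonal to U. Then F is a face of P if and only if F = F_0 + U for a unique face F_0 of P_0, and N(P, F_0 + U) = N(P_0, F_0) ∩ U^⊥. -/
open RealInnerProductSpace Pointwise

noncomputable section

abbrev Euc (d : ℕ) := EuclideanSpace ℝ (Fin d)

/-- A polyhedral set: intersection of finitely many closed half-spaces. -/
def IsPolyhedral {d : ℕ} (P : Set (Euc d)) : Prop :=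
  ∃ s : Finset (Euc d × ℝ), P = {x | ∀ h ∈ s, ⟪h.1, x⟫ ≤ h.2}

/-- A (nonempty) face of a convex set: a nonempty convex extreme subset. -/
def IsFaceOf {d : ℕ} (P F : Set (Euc d)) : Prop :=
  F.Nonempty ∧ Convex ℝ F ∧ IsExtreme ℝ P F

/-- The normal cone of `P` at the face `F`. -/
def normalCone {d : ℕ} (P F : Set (Euc d)) : Set (Euc d) :=
  {u | ∀ f ∈ F, ∀ z ∈ P, ⟪u, z - f⟫ ≤ 0}

/-- The dimension of a set: the rank of the direction of its affine hull. -/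
def sdim {d : ℕ} (F : Set (Euc d)) : ℕ :=
  Module.finrank ℝ (affineSpan ℝ F).direction

/-- φ_P(x) = Σ_{F face of P} (-1)^{dim F} 1_{F - N(P,F)}(x). -/
def phi {d : ℕ} (P : Set (Euc d)) (x : Euc d) : ℤ :=
  ∑ᶠ F ∈ {F : Set (Euc d) | IsFaceOf P F},
    (-1 : ℤ) ^ sdim F * (F - normalCone P F).indicator (fun _ => (1 : ℤ)) x

/-- A set is line-free if it contains no affine line. -/
def LineFree {d : ℕ} (P : Set (Euc d)) : Prop :=
  ∀ x y : Euc d, y ≠ 0 → ∃ t : ℝ, x + t • y ∉ P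

/-!
Since the direction of `P₀` meets `U` only in `0`, every point of `P₀ + U` splits uniquely as
`a + u`. An extreme subset `F` of `P₀ + U` contains, with each point `f`, the whole affine subspace `f + U`
(as `f` is the midpoint of `f + u` and `f - u`), so `F = (P₀ ∩ F) + U`; unique splitting makes
`F₀ ↦ F₀ + U` and `F ↦ P₀ ∩ F` mutually inverse between the faces. A normal vector at `F₀ + U`
must be orthogonal to `U`, and for such vectors the `U`-components drop out of `⟪n, z - f⟫`.
-/

theorem IsExtreme.inter_of_subset {𝕜 E : Type*} [Semiring 𝕜] [PartialOrder 𝕜]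
    [AddCommMonoid E] [SMul 𝕜 E] {A B F : Set E} (hF : IsExtreme 𝕜 B F) (hAB : A ⊆ B) :
    IsExtreme 𝕜 A (A ∩ F) :=
  ⟨Set.inter_subset_left, fun _ hx₁ _ hx₂ _ hx hseg =>
    ⟨hx₁, hF.left_mem_of_mem_openSegment (hAB hx₁) (hAB hx₂) hx.2 hseg⟩⟩

section DisjointDirection

variable {𝕜 E : Type*} [Ring 𝕜] [AddCommGroup E] [Module 𝕜 E] {A F : Set E} {U : Submodule 𝕜 E}

theorem eq_of_add_eq_add_of_disjoint_vectorSpan (hAU : Disjoint (vectorSpan 𝕜 A) U)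
    {a a' u u' : E} (ha : a ∈ A) (ha' : a' ∈ A) (hu : u ∈ U) (hu' : u' ∈ U)
    (h : a + u = a' + u') : a = a' := by
  have hsub : a - a' = u' - u := by rw [sub_eq_sub_iff_add_eq_add, h, add_comm]
  have hmem : a - a' ∈ vectorSpan 𝕜 A ⊓ U :=
    ⟨vsub_mem_vectorSpan 𝕜 ha ha', hsub ▸ U.sub_mem hu' hu⟩
  rwa [hAU.eq_bot, Submodule.mem_bot, sub_eq_zero] at hmem

theorem add_submodule_inter_eq (hAU : Disjoint (vectorSpan 𝕜 A) U) (hFA : F ⊆ A) :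
    (F + (U : Set E)) ∩ A = F := by
  refine Set.Subset.antisymm ?_ fun x hx => ⟨Set.subset_add_left _ U.zero_mem hx, hFA hx⟩
  rintro _ ⟨⟨f, hf, u, hu, rfl⟩, hfu⟩
  have hf_eq : f = f + u :=
    eq_of_add_eq_add_of_disjoint_vectorSpan hAU (hFA hf) hfu hu U.zero_mem (add_zero _).symm
  show f + u ∈ F
  rw [← hf_eq]
  exact hf

variable [PartialOrder 𝕜]

theorem IsExtreme.add_submodule (hA : Convex 𝕜 A) (hAU : Disjoint (vectorSpan 𝕜 A) U)
    (hF : IsExtreme 𝕜 A F) : IsExtreme 𝕜 (A + (U : Set E)) (F + (U : Set E)) := by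
  refine ⟨Set.add_subset_add_right hF.subset, ?_⟩
  rintro _ ⟨a₁, ha₁, u₁, hu₁, rfl⟩ _ ⟨a₂, ha₂, u₂, hu₂, rfl⟩ _ ⟨f, hf, v, hv, rfl⟩
    ⟨s, t, hs, ht, hst, hseg⟩
  have hsplit : s • a₁ + t • a₂ + (s • u₁ + t • u₂) = f + v :=
    .trans (by rw [smul_add, smul_add]; abel) hseg
  have hf_eq : s • a₁ + t • a₂ = f :=
    eq_of_add_eq_add_of_disjoint_vectorSpan hAU (hA ha₁ ha₂ hs.le ht.le hst) (hF.subset hf)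
      (U.add_mem (U.smul_mem _ hu₁) (U.smul_mem _ hu₂)) hv hsplit
  exact Set.add_mem_add
    (hF.left_mem_of_mem_openSegment ha₁ ha₂ hf ⟨s, t, hs, ht, hst, hf_eq⟩) hu₁

end DisjointDirection

section InvariantExtreme

variable {𝕜 E : Type*} [Field 𝕜] [LinearOrder 𝕜] [IsStrictOrderedRing 𝕜] [AddCommGroup E]
  [Module 𝕜 E] {A F : Set E} {U : Submodule 𝕜 E}

theorem IsExtreme.add_mem_of_add_submodule (hF : IsExtreme 𝕜 (A + (U : Set E)) F) {f u : E}
    (hf : f ∈ F) (hu : u ∈ U) : f + u ∈ F := by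
  obtain ⟨a, ha, v, hv, rfl⟩ := hF.subset hf
  have hplus : a + v + u ∈ A + (U : Set E) :=
    ⟨a, ha, v + u, U.add_mem hv hu, (add_assoc _ _ _).symm⟩
  have hminus : a + v - u ∈ A + (U : Set E) :=
    ⟨a, ha, v - u, U.sub_mem hv hu, (add_sub_assoc _ _ _).symm⟩
  have hmid : a + v ∈ openSegment 𝕜 (a + v + u) (a + v - u) :=
    ⟨1 / 2, 1 / 2, by norm_num, by norm_num, by norm_num, by module⟩
  exact hF.left_mem_of_mem_openSegment hplus hminus hf hmid

theorem IsExtreme.inter_add_submodule_eq (hF : IsExtreme 𝕜 (A + (U : Set E)) F) :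
    (A ∩ F) + (U : Set E) = F := by
  refine Set.Subset.antisymm ?_ fun f hf => ?_
  · rintro _ ⟨a, ⟨-, haF⟩, u, hu, rfl⟩
    exact hF.add_mem_of_add_submodule haF hu
  · obtain ⟨a, ha, v, hv, rfl⟩ := hF.subset hf
    have haF : a ∈ F := by simpa using hF.add_mem_of_add_submodule hf (U.neg_mem hv)
    exact ⟨a, ⟨ha, haF⟩, v, hv, rfl⟩

end InvariantExtreme

theorem IsPolyhedral.convex {d : ℕ} {P : Set (Euc d)} (hP : IsPolyhedral P) :
    Convex ℝ P := by
  obtain ⟨s, rfl⟩ := hP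
  simp only [Set.ofPred_forall]
  exact convex_iInter₂ fun h _ => convex_halfSpace_le (innerₛₗ ℝ h.1).isLinear h.2

section Faces

variable {d : ℕ} {A F : Set (Euc d)} {U : Submodule ℝ (Euc d)}

theorem IsFaceOf.add_submodule (hA : Convex ℝ A) (hAU : Disjoint (vectorSpan ℝ A) U)
    (hF : IsFaceOf A F) : IsFaceOf (A + (U : Set (Euc d))) (F + (U : Set (Euc d))) :=
  ⟨hF.1.add ⟨0, U.zero_mem⟩, hF.2.1.add U.convex, hF.2.2.add_submodule hA hAU⟩

theorem IsFaceOf.inter_of_add_submodule (hA : Convex ℝ A)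
    (hF : IsFaceOf (A + (U : Set (Euc d))) F) : IsFaceOf A (A ∩ F) :=
  ⟨(hF.2.2.inter_add_submodule_eq ▸ hF.1).of_add_left, hA.inter hF.2.1,
    hF.2.2.inter_of_subset (Set.subset_add_left _ U.zero_mem)⟩

theorem normalCone_add_submodule (hF : F.Nonempty) (hFA : F ⊆ A) :
    normalCone (A + (U : Set (Euc d))) (F + (U : Set (Euc d))) =
      normalCone A F ∩ (Uᗮ : Set (Euc d)) := by
  ext n
  refine ⟨fun hn => ⟨fun f hf z hz => ?_, ?_⟩, ?_⟩
  · exact hn f (Set.subset_add_left _ U.zero_mem hf) z (Set.subset_add_left _ U.zero_mem hz)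
  · obtain ⟨f, hf⟩ := hF
    have hfU := Set.subset_add_left _ U.zero_mem hf
    refine (Submodule.mem_orthogonal' U n).mpr fun w hw => le_antisymm ?_ ?_
    · simpa using hn f hfU (f + w) (Set.add_mem_add (hFA hf) hw)
    · simpa using hn f hfU (f + -w) (Set.add_mem_add (hFA hf) (U.neg_mem hw))
  · rintro ⟨hnA, hnU⟩ _ ⟨f, hf, v, hv, rfl⟩ _ ⟨z, hz, w, hw, rfl⟩
    have hperp : ⟪n, w - v⟫ = 0 :=
      (Submodule.mem_orthogonal' U n).mp hnU _ (U.sub_mem hw hv)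
    calc ⟪n, z + w - (f + v)⟫ = ⟪n, z - f⟫ + ⟪n, w - v⟫ := by
          rw [← inner_add_right]; congr 1; abel
      _ ≤ 0 := by linarith [hnA f hf z hz]

end Faces

theorem faces_of_sum_with_subspace_general {d : ℕ} (P₀ : Set (Euc d)) (U : Submodule ℝ (Euc d))
    (hP₀ : IsPolyhedral P₀)
    (horth : (affineSpan ℝ P₀).direction ≤ Uᗮ) :
    (∀ F : Set (Euc d),
      IsFaceOf (P₀ + (U : Set (Euc d))) F ↔
        ∃! F₀ : Set (Euc d), IsFaceOf P₀ F₀ ∧ F = F₀ + (U : Set (Euc d))) ∧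
    (∀ F₀ : Set (Euc d), IsFaceOf P₀ F₀ →
      normalCone (P₀ + (U : Set (Euc d))) (F₀ + (U : Set (Euc d))) =
        normalCone P₀ F₀ ∩ (Uᗮ : Set (Euc d))) := by
  have hconv := hP₀.convex
  have hdisj : Disjoint (vectorSpan ℝ P₀) U :=
    U.orthogonal_disjoint.symm.mono_left (direction_affineSpan ℝ P₀ ▸ horth)
  refine ⟨fun F => ⟨fun hF => ?_, ?_⟩, fun F₀ hF₀ => normalCone_add_submodule hF₀.1 hF₀.2.2.1⟩
  · refine ⟨P₀ ∩ F, ⟨hF.inter_of_add_submodule hconv, hF.2.2.inter_add_submodule_eq.symm⟩, ?_⟩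
    rintro G ⟨hG, rfl⟩
    rw [Set.inter_comm, add_submodule_inter_eq hdisj hG.2.2.1]
  · rintro ⟨F₀, ⟨hF₀, rfl⟩, -⟩
    exact hF₀.add_submodule hconv hdisj

theorem faces_of_sum_with_subspace {d : ℕ} (P₀ : Set (Euc d)) (U : Submodule ℝ (Euc d))
    (hP₀ : IsPolyhedral P₀) (hne : P₀.Nonempty)
    (horth : (affineSpan ℝ P₀).direction ≤ Uᗮ) :
    (∀ F : Set (Euc d),
      IsFaceOf (P₀ + (U : Set (Euc d))) F ↔
        ∃! F₀ : Set (Euc d), IsFaceOf P₀ F₀ ∧ F = F₀ + (U : Set (Euc d))) ∧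
    (∀ F₀ : Set (Euc d), IsFaceOf P₀ F₀ →
      normalCone (P₀ + (U : Set (Euc d))) (F₀ + (U : Set (Euc d))) =
        normalCone P₀ F₀ ∩ (Uᗮ : Set (Euc d))) :=
  faces_of_sum_with_subspace_general P₀ U hP₀ horth
end
end

section
/- Let P ⊂ ℝ^d be a full-dimensional polyhedral set with facets F_1,…,F_n having exterior unit normals u_1,…,u_n, and let F be a nonempty face of P. Then N(P,F) = pos{u_i : F ⊆ F_i}, and the faces of the cone N(P,F) are exactly the cones N(P,H) for faces H of P with F ⊆ H. -/
/-!
A convex subset `F` of the polyhedron `P` contains a point `f` at which exactly the constraints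
that are tight on all of `F` are tight. Near `f`, `P` looks like the cone cut out by these
constraints, so Farkas' lemma identifies `N(P, F)` with the cone spanned by their normals.
A face `S` of this finitely generated cone is exposed by some vector `w` (Farkas again); moving
`f` a little along `w` gives a point whose minimal face `H` has as tight constraints exactly
those with normals in `S`, so that `N(P, H) = S`. Conversely, for `F ⊆ H` the cone `N(P, H)` is
cut out of `N(P, F)` by the supporting hyperplanes `⟪h - f, ·⟫ = 0`, `h ∈ H`, hence is a face.
Farkas' lemma for finitely generated cones follows from the separation theorem for closed cones,
closedness coming from the conic Carathéodory theorem.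
-/

open RealInnerProductSpace Pointwise

noncomputable section

/-- The positive hull of a set: all finite nonnegative combinations. -/
def posHullOf {d : ℕ} (A : Set (Euc d)) : Set (Euc d) :=
  {x | ∃ (s : Finset (Euc d)) (c : Euc d → ℝ),
    ↑s ⊆ A ∧ (∀ e, 0 ≤ c e) ∧ x = ∑ e ∈ s, c e • e}

open PointedCone

section ConicCaratheodory

variable {E : Type*} [AddCommGroup E] [Module ℝ E]

theorem PointedCone.mem_hull_finset_iff {t : Finset E} {x : E} :
    x ∈ hull ℝ (t : Set E) ↔ ∃ c : E → ℝ, (∀ e ∈ t, 0 ≤ c e) ∧ ∑ e ∈ t, c e • e = x := by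
  constructor
  · intro hx
    obtain ⟨c, -, rfl⟩ := Submodule.mem_span_finset.1 hx
    exact ⟨fun e => c e, fun e _ => (c e).2, rfl⟩
  · rintro ⟨c, hc, rfl⟩
    exact sum_mem fun e he => smul_mem _ (hc e he) (subset_hull he)

theorem PointedCone.mem_hull_iff_exists_finset {s : Set E} {x : E} :
    x ∈ hull ℝ s ↔
      ∃ (t : Finset E) (c : E → ℝ), ↑t ⊆ s ∧ (∀ e, 0 ≤ c e) ∧ ∑ e ∈ t, c e • e = x := by
  constructor
  · intro hx
    obtain ⟨c, t, hts, -, rfl⟩ := Submodule.mem_span_iff_exists_finset_subset.1 hx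
    exact ⟨t, fun e => c e, hts, fun e => (c e).2, rfl⟩
  · rintro ⟨t, c, hts, hc, rfl⟩
    exact sum_mem fun e he => smul_mem _ (hc e) (subset_hull (hts he))

theorem PointedCone.mem_hull_erase [DecidableEq E] {t : Finset E}
    (ht : ¬ LinearIndepOn ℝ id (t : Set E)) {x : E} (hx : x ∈ hull ℝ (t : Set E)) :
    ∃ y ∈ t, x ∈ hull ℝ (t.erase y : Set E) := by
  obtain ⟨c, hc, rfl⟩ := mem_hull_finset_iff.1 hx
  obtain ⟨g, hg, hgpos⟩ : ∃ g : E → ℝ, ∑ e ∈ t, g e • e = 0 ∧ ∃ e ∈ t, 0 < g e := by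
    obtain ⟨g, hg, e, he, hge⟩ := not_linearIndepOn_finset_iff.1 ht
    rcases hge.lt_or_gt with hneg | hpos
    · exact ⟨-g, by simpa [neg_smul] using hg, e, he, by simpa using hneg⟩
    · exact ⟨g, hg, e, he, hpos⟩
  obtain ⟨y, hy, hmin⟩ := {e ∈ t | 0 < g e}.exists_min_image (fun e => c e / g e)
    (by simpa [Finset.filter_nonempty_iff] using hgpos)
  rw [Finset.mem_filter] at hy
  set k := c y / g y
  have hk : 0 ≤ k := div_nonneg (hc y hy.1) hy.2.le
  refine ⟨y, hy.1, mem_hull_finset_iff.2 ⟨fun e => c e - k * g e, fun e he => ?_, ?_⟩⟩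
  · have he := Finset.mem_of_mem_erase he
    rcases le_or_gt (g e) 0 with hge | hge
    · nlinarith [hc e he]
    · have := hmin e (Finset.mem_filter.2 ⟨he, hge⟩)
      rw [le_div_iff₀ hge] at this
      linarith
  · have hy0 : c y - k * g y = 0 := by simp [k, hy.2.ne']
    rw [Finset.sum_erase _ (by simp [hy0]), Finset.sum_congr rfl fun e _ => sub_smul _ _ e,
      Finset.sum_sub_distrib]
    simp [mul_smul, ← Finset.smul_sum, hg]

theorem PointedCone.exists_linearIndepOn_subset_mem_hull {t : Finset E} {x : E}
    (hx : x ∈ hull ℝ (t : Set E)) :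
    ∃ t' ⊆ t, LinearIndepOn ℝ id (t' : Set E) ∧ x ∈ hull ℝ (t' : Set E) := by
  classical
  induction t using Finset.strongInduction with
  | H t ih =>
    by_cases ht : LinearIndepOn ℝ id (t : Set E)
    · exact ⟨t, subset_rfl, ht, hx⟩
    · obtain ⟨y, hy, hxy⟩ := mem_hull_erase ht hx
      obtain ⟨t', ht', hli, hx'⟩ := ih _ (Finset.erase_ssubset hy) hxy
      exact ⟨t', ht'.trans (Finset.erase_subset _ _), hli, hx'⟩

end ConicCaratheodory

section Closedness

variable {E : Type*} [AddCommGroup E] [Module ℝ E] [TopologicalSpace E] [IsTopologicalAddGroup E]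
  [ContinuousSMul ℝ E] [T2Space E]

theorem PointedCone.isClosed_hull_of_linearIndepOn {t : Finset E}
    (ht : LinearIndepOn ℝ id (t : Set E)) : IsClosed (hull ℝ (t : Set E) : Set E) := by
  let L := Fintype.linearCombination ℝ (Subtype.val : t → E)
  have hL : (hull ℝ (t : Set E) : Set E) = L '' Set.Ici 0 := by
    ext x
    rw [SetLike.mem_coe, mem_hull_finset_iff]
    constructor
    · rintro ⟨c, hc, rfl⟩
      exact ⟨fun e => c e, fun e => hc e e.2,
        by simp [L, Fintype.linearCombination_apply, ← t.sum_coe_sort]⟩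
    · rintro ⟨c, hc, rfl⟩
      classical
      refine ⟨fun e => if he : e ∈ t then c ⟨e, he⟩ else 0,
        fun e he => by simpa [he] using hc ⟨e, he⟩, ?_⟩
      simp [L, Fintype.linearCombination_apply, ← t.sum_coe_sort]
  rw [hL]
  exact (L.isClosedEmbedding_of_injective (LinearMap.ker_eq_bot.2
    ht.fintypeLinearCombination_injective)).isClosedMap _ isClosed_Ici

theorem PointedCone.isClosed_hull_of_finite {s : Set E} (hs : s.Finite) :
    IsClosed (hull ℝ s : Set E) := by
  classical
  lift s to Finset E using hs
  have : (hull ℝ (s : Set E) : Set E) =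
      ⋃ (t : Finset E) (_ : t ∈ s.powerset.filter fun t : Finset E =>
        LinearIndepOn ℝ id (t : Set E)), (hull ℝ (t : Set E) : Set E) := by
    refine subset_antisymm (fun x hx => ?_) (Set.iUnion₂_subset fun t ht => ?_)
    · obtain ⟨t, hts, hli, hxt⟩ := exists_linearIndepOn_subset_mem_hull hx
      exact Set.mem_biUnion (Finset.mem_filter.2 ⟨Finset.mem_powerset.2 hts, hli⟩) hxt
    · exact Submodule.span_mono (Finset.mem_powerset.1 (Finset.mem_filter.1 ht).1)
  rw [this]
  exact isClosed_biUnion_finset fun t ht =>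
    isClosed_hull_of_linearIndepOn (Finset.mem_filter.1 ht).2

end Closedness

section Farkas

variable {E : Type*} [NormedAddCommGroup E] [InnerProductSpace ℝ E] [CompleteSpace E]

theorem PointedCone.exists_inner_pos_of_notMem_hull {s : Set E} (hs : s.Finite) {x : E}
    (hx : x ∉ hull ℝ s) : ∃ w, (∀ y ∈ s, ⟪y, w⟫ ≤ 0) ∧ 0 < ⟪x, w⟫ := by
  let K : ProperCone ℝ E := ⟨hull ℝ s, isClosed_hull_of_finite hs⟩
  obtain ⟨w, hwK, hxw⟩ := K.hyperplane_separation' hx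
  refine ⟨-w, fun y hy => ?_, ?_⟩ <;> rw [inner_neg_right]
  · linarith [hwK y (subset_hull hy)]
  · linarith

end Farkas

section Faces

theorem PointedCone.IsFaceOf.eq_hull_inter {R M : Type*} [Semiring R] [PartialOrder R]
    [IsOrderedRing R] [AddCommGroup M] [Module R M] {s : Set M} {S : PointedCone R M}
    (hS : S.IsFaceOf (hull R s)) : S = hull R (s ∩ S) := by
  refine le_antisymm (fun x hx => ?_) (Submodule.span_le.2 Set.inter_subset_right)
  induction hS.le hx using Submodule.span_induction with
  | mem x hxs => exact subset_hull ⟨hxs, hx⟩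
  | zero => exact zero_mem _
  | add x y hxC hyC ihx ihy =>
    exact add_mem (ihx (hS.mem_of_add_mem_left hxC hyC hx))
      (ihy (hS.mem_of_add_mem_right hxC hyC hx))
  | smul a x hxC ih =>
    rcases a.2.eq_or_lt with ha | ha
    · simp [show a = 0 from Subtype.ext ha.symm]
    · exact Submodule.smul_mem _ a
        (ih (hS.mem_of_smul_add_mem hxC (zero_mem _) ha (by simpa using hx)))

variable {E : Type*} [NormedAddCommGroup E] [InnerProductSpace ℝ E] [CompleteSpace E]
  {s : Set E} {S : PointedCone ℝ E}

theorem PointedCone.IsFaceOf.exists_separating_of_notMem (hs : s.Finite)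
    (hS : S.IsFaceOf (hull ℝ s)) {x : E} (hxs : x ∈ s) (hxS : x ∉ S) :
    ∃ w, (∀ y ∈ s, ⟪y, w⟫ ≤ 0) ∧ (∀ y ∈ s, y ∈ S → ⟪y, w⟫ = 0) ∧ ⟪x, w⟫ < 0 := by
  have hx : -x ∉ hull ℝ (s ∪ -(s ∩ S)) := by
    change -x ∉ Submodule.span _ _
    rw [Submodule.span_union, Submodule.span_neg_eq_neg, Submodule.mem_sup]
    rintro ⟨c, hc, d, hd, hcd⟩
    have hdS : -d ∈ S := Submodule.span_le.2 Set.inter_subset_right (Submodule.mem_neg.1 hd)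
    rw [show -d = x + c by rw [← neg_neg x, ← hcd]; abel] at hdS
    exact hxS (hS.mem_of_add_mem_left (subset_hull hxs) hc hdS)
  obtain ⟨w, hw, hxw⟩ := exists_inner_pos_of_notMem_hull (hs.union (hs.inter_of_left _).neg) hx
  refine ⟨w, fun y hy => hw y (.inl hy), fun y hy hyS => le_antisymm (hw y (.inl hy)) ?_, ?_⟩
  · simpa using hw (-y) (.inr (by simpa using ⟨hy, hyS⟩))
  · simpa using hxw

theorem PointedCone.IsFaceOf.exists_exposing_vector (hs : s.Finite)
    (hS : S.IsFaceOf (hull ℝ s)) :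
    ∃ w, ∀ x ∈ s, ⟪x, w⟫ ≤ 0 ∧ (⟪x, w⟫ = 0 ↔ x ∈ S) := by
  classical
  choose! W hW using fun x (hx : x ∈ s \ (S : Set E)) =>
    hS.exists_separating_of_notMem hs hx.1 hx.2
  set T := hs.toFinset.filter (· ∉ S)
  have hT : ∀ x ∈ T, x ∈ s \ (S : Set E) := fun x hx => by simpa [T] using hx
  refine ⟨∑ x ∈ T, W x, fun y hy => ?_⟩
  rw [inner_sum]
  have hle : ∀ x ∈ T, ⟪y, W x⟫ ≤ 0 := fun x hx => (hW x (hT x hx)).1 y hy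
  refine ⟨Finset.sum_nonpos hle, fun h => ?_,
    fun hyS => Finset.sum_eq_zero fun x hx => (hW x (hT x hx)).2.1 y hy hyS⟩
  by_contra hyS
  have hyT : y ∈ T := by simpa [T, hy] using hyS
  have := Finset.sum_lt_sum hle ⟨y, hyT, (hW y (hT y hyT)).2.2⟩
  simp [h] at this

end Faces

section ExtremeSubsets

variable {E : Type*} [AddCommGroup E] [Module ℝ E] {C : PointedCone ℝ E} {S : Set E}

theorem IsExtreme.zero_mem_of_pointedCone (hS : IsExtreme ℝ (C : Set E) S) (hne : S.Nonempty) :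
    (0 : E) ∈ S := by
  obtain ⟨x, hx⟩ := hne
  have hseg : x ∈ openSegment ℝ 0 ((2 : ℝ) • x) :=
    ⟨1 / 2, 1 / 2, by norm_num, by norm_num, by norm_num, by simp [smul_smul]⟩
  exact hS.left_mem_of_mem_openSegment C.zero_mem (C.smul_mem zero_le_two (hS.subset hx)) hx hseg

theorem IsExtreme.smul_mem_of_pointedCone (hS : IsExtreme ℝ (C : Set E) S) (hconv : Convex ℝ S)
    {x : E} (hx : x ∈ S) {t : ℝ} (ht : 0 ≤ t) : t • x ∈ S := by
  have h0 := hS.zero_mem_of_pointedCone ⟨x, hx⟩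
  rcases le_or_gt t 1 with ht1 | ht1
  · exact hconv.smul_mem_of_zero_mem h0 hx ⟨ht, ht1⟩
  · have hseg : x ∈ openSegment ℝ (t • x) 0 :=
      ⟨t⁻¹, 1 - t⁻¹, by positivity, sub_pos.2 (inv_lt_one_of_one_lt₀ ht1), by ring,
        by simp [smul_smul, inv_mul_cancel₀ (by positivity : t ≠ 0)]⟩
    exact hS.left_mem_of_mem_openSegment (C.smul_mem ht (hS.subset hx)) C.zero_mem hx hseg

theorem IsExtreme.exists_isFaceOf (hS : IsExtreme ℝ (C : Set E) S) (hne : S.Nonempty)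
    (hconv : Convex ℝ S) : ∃ S' : PointedCone ℝ E, (S' : Set E) = S ∧ S'.IsFaceOf C := by
  have half_add_half {x y : E} : x + y = (2 : ℝ) • ((1 / 2 : ℝ) • x + (1 / 2 : ℝ) • y) := by
    rw [smul_add, smul_smul, smul_smul]; norm_num
  refine ⟨{ carrier := S
            add_mem' := fun hx hy => ?_
            zero_mem' := hS.zero_mem_of_pointedCone hne
            smul_mem' := fun c x hx => hS.smul_mem_of_pointedCone hconv hx c.2 }, rfl, ?_⟩
  · rw [half_add_half]
    exact hS.smul_mem_of_pointedCone hconv (hconv hx hy (by norm_num) (by norm_num) (by norm_num))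
      zero_le_two
  refine PointedCone.IsFaceOf.of_mem_of_add_mem_left hS.subset fun {x y} hx hy hxy => ?_
  have hseg : x + y ∈ openSegment ℝ ((2 : ℝ) • x) ((2 : ℝ) • y) :=
    ⟨1 / 2, 1 / 2, by norm_num, by norm_num, by norm_num, by simp [smul_smul]⟩
  have h2x := hS.left_mem_of_mem_openSegment (C.smul_mem zero_le_two hx)
    (C.smul_mem zero_le_two hy) hxy hseg
  have := hS.smul_mem_of_pointedCone hconv h2x (by norm_num : (0 : ℝ) ≤ 1 / 2)
  rwa [smul_smul, one_div, inv_mul_cancel₀ two_ne_zero, one_smul] at this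

end ExtremeSubsets

section Polyhedron

open Filter Topology

variable {E : Type*} [NormedAddCommGroup E] [InnerProductSpace ℝ E]

theorem isExtreme_inter_setOf_inner_eq {A : Set E} {v : E} {c : ℝ} (h : ∀ x ∈ A, ⟪v, x⟫ ≤ c) :
    IsExtreme ℝ A (A ∩ {x | ⟪v, x⟫ = c}) := by
  refine ⟨Set.inter_subset_left, fun x hx y hy z hz ⟨a, b, ha, hb, hab, hzxy⟩ => ⟨hx, ?_⟩⟩
  have hz' : a * ⟪v, x⟫ + b * ⟪v, y⟫ = c := by
    rw [← hz.2, ← hzxy, inner_add_right, real_inner_smul_right, real_inner_smul_right]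
  obtain rfl : b = 1 - a := by linarith
  refine le_antisymm (h x hx) (le_of_not_gt fun hlt => ?_)
  nlinarith [mul_lt_mul_of_pos_left hlt ha, mul_le_mul_of_nonneg_left (h y hy) hb.le]

variable {ι : Type*} (u : ι → E) (α : ι → ℝ)

def polyhedron : Set E := {x | ∀ i, ⟪u i, x⟫ ≤ α i}

def minimalFace (x : E) : Set E :=
  {y ∈ polyhedron u α | ∀ i, ⟪u i, x⟫ = α i → ⟪u i, y⟫ = α i}

variable {u α}

theorem mem_minimalFace_self {x : E} (hx : x ∈ polyhedron u α) : x ∈ minimalFace u α x :=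
  ⟨hx, fun _ h => h⟩

theorem minimalFace_subset_iff {x : E} (hx : x ∈ polyhedron u α) {i : ι} :
    minimalFace u α x ⊆ {y | ⟪u i, y⟫ = α i} ↔ ⟪u i, x⟫ = α i :=
  ⟨fun h => h (mem_minimalFace_self hx), fun hi _ hy => hy.2 i hi⟩

theorem convex_minimalFace (x : E) : Convex ℝ (minimalFace u α x) := by
  intro y hy z hz a b ha hb hab
  obtain rfl : b = 1 - a := by linarith
  refine ⟨fun i => ?_, fun i hi => ?_⟩ <;>
    rw [inner_add_right, real_inner_smul_right, real_inner_smul_right]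
  · nlinarith [mul_le_mul_of_nonneg_left (hy.1 i) ha, mul_le_mul_of_nonneg_left (hz.1 i) hb]
  · rw [hy.2 i hi, hz.2 i hi]; ring

theorem isExtreme_minimalFace (x : E) : IsExtreme ℝ (polyhedron u α) (minimalFace u α x) := by
  refine ⟨fun y hy => hy.1, fun y hy z hz w hw hseg => ⟨hy, fun i hi => ?_⟩⟩
  have hext := isExtreme_inter_setOf_inner_eq (A := polyhedron u α) fun y hy => hy i
  exact (hext.left_mem_of_mem_openSegment hy hz ⟨hw.1, hw.2 i hi⟩ hseg).2

theorem exists_mem_inner_eq_iff_subset [Finite ι] {F : Set E} (hFP : F ⊆ polyhedron u α)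
    (hconv : Convex ℝ F) (hne : F.Nonempty) :
    ∃ f ∈ F, ∀ i, ⟪u i, f⟫ = α i ↔ F ⊆ {y | ⟪u i, y⟫ = α i} := by
  obtain ⟨f, hfF, hmin⟩ := exists_minimalFor_of_wellFoundedLT (· ∈ F)
    (fun y => {i | ⟪u i, y⟫ = α i}) hne
  refine ⟨f, hfF, fun i => ⟨fun hi g hg => ?_, fun h => h hfF⟩⟩
  -- the constraints tight at the midpoint of `f` and `g` are tight at both, so by minimality
  -- every constraint tight at `f` is tight at `g`
  have hm := hconv hfF hg (by norm_num : (0 : ℝ) ≤ 1 / 2) (by norm_num : (0 : ℝ) ≤ 1 / 2)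
    (by norm_num)
  have hseg : (1 / 2 : ℝ) • f + (1 / 2 : ℝ) • g ∈ openSegment ℝ f g :=
    ⟨1 / 2, 1 / 2, by norm_num, by norm_num, by norm_num, rfl⟩
  have htight {j : ι} (hj : ⟪u j, (1 / 2 : ℝ) • f + (1 / 2 : ℝ) • g⟫ = α j) :
      ⟪u j, f⟫ = α j ∧ ⟪u j, g⟫ = α j :=
    have hext := isExtreme_inter_setOf_inner_eq (A := polyhedron u α) fun y hy => hy j
    ⟨(hext.left_mem_of_mem_openSegment (hFP hfF) (hFP hg) ⟨hFP hm, hj⟩ hseg).2,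
      (hext.right_mem_of_mem_openSegment (hFP hfF) (hFP hg) ⟨hFP hm, hj⟩ hseg).2⟩
  exact (htight (hmin hm (fun j hj => (htight hj).1) hi)).2

theorem exists_pos_add_smul_mem_polyhedron [Finite ι] {f w : E} (hf : f ∈ polyhedron u α)
    (hw : ∀ i, ⟪u i, f⟫ = α i → ⟪u i, w⟫ ≤ 0) :
    ∃ t : ℝ, 0 < t ∧ f + t • w ∈ polyhedron u α ∧
      ∀ i, ⟪u i, f + t • w⟫ = α i ↔ ⟪u i, f⟫ = α i ∧ ⟪u i, w⟫ = 0 := by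
  have hslack : ∀ᶠ t in 𝓝[>] (0 : ℝ), ∀ i, ⟪u i, f⟫ < α i → ⟪u i, f + t • w⟫ < α i := by
    refine nhdsWithin_le_nhds (eventually_all.2 fun i => ?_)
    by_cases hi : ⟪u i, f⟫ < α i
    · have hc : Continuous fun t : ℝ => ⟪u i, f + t • w⟫ := by fun_prop
      filter_upwards [hc.continuousAt.eventually_lt continuousAt_const (by simpa using hi)]
        with t ht using fun _ => ht
    · exact .of_forall fun _ h => absurd h hi
  obtain ⟨t, hlt, ht⟩ := (hslack.and self_mem_nhdsWithin).exists
  have key : ∀ i, ⟪u i, f + t • w⟫ ≤ α i ∧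
      (⟪u i, f + t • w⟫ = α i ↔ ⟪u i, f⟫ = α i ∧ ⟪u i, w⟫ = 0) := by
    intro i
    rcases (hf i).lt_or_eq with hi | hi
    · exact ⟨(hlt i hi).le, by simp [(hlt i hi).ne, hi.ne]⟩
    · rw [inner_add_right, real_inner_smul_right, hi]
      have hwi := hw i hi
      constructor
      · linarith [mul_nonpos_of_nonneg_of_nonpos ht.le hwi]
      · simp [ht.ne']
  exact ⟨t, ht, fun i => (key i).1, fun i => (key i).2⟩

end Polyhedron

section NormalCone

variable {d : ℕ}

theorem normalCone_eq_innerDual (P F : Set (Euc d)) :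
    normalCone P F = ProperCone.innerDual (F - P) := by
  ext v
  simp only [normalCone, Set.mem_ofPred_eq, SetLike.mem_coe, ProperCone.mem_innerDual,
    Set.mem_sub]
  have key (f z : Euc d) : ⟪f - z, v⟫ = -⟪v, z - f⟫ := by
    rw [real_inner_comm, ← inner_neg_right, neg_sub]
  constructor
  · rintro h _ ⟨f, hf, z, hz, rfl⟩
    linarith [h f hf z hz, key f z]
  · intro h f hf z hz
    linarith [h ⟨f, hf, z, hz, rfl⟩, key f z]

theorem hull_subset_normalCone {P F s : Set (Euc d)} (h : s ⊆ normalCone P F) :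
    (PointedCone.hull ℝ s : Set (Euc d)) ⊆ normalCone P F := by
  rw [normalCone_eq_innerDual] at *
  exact Submodule.span_le.2 h

theorem normalCone_eq_iInter {P F H : Set (Euc d)} {f : Euc d} (hf : f ∈ F) (hFH : F ⊆ H)
    (hHP : H ⊆ P) :
    normalCone P H = ⋂ h : H, {v ∈ normalCone P F | ⟪(h : Euc d) - f, v⟫ = 0} := by
  ext v
  simp only [Set.mem_iInter, Set.mem_ofPred_eq]
  constructor
  · intro hv ⟨h, hh⟩
    refine ⟨fun f' hf' z hz => hv f' (hFH hf') z hz, le_antisymm ?_ ?_⟩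
    · rw [real_inner_comm]; exact hv f (hFH hf) h (hHP hh)
    · have := hv h hh f (hHP (hFH hf))
      rw [← neg_sub, inner_neg_right, real_inner_comm] at this
      exact neg_nonpos.1 this
  · intro hv h hh z hz
    obtain ⟨hvF, hvh⟩ := hv ⟨h, hh⟩
    have : ⟪v, z - h⟫ = ⟪v, z - f⟫ - ⟪h - f, v⟫ := by
      rw [real_inner_comm v (h - f), ← inner_sub_right, sub_sub_sub_cancel_right]
    rw [this, hvh, sub_zero]
    exact hvF f hf z hz

theorem isFaceOf_normalCone {P F H : Set (Euc d)} (hF : F.Nonempty) (hFH : F ⊆ H)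
    (hHP : H ⊆ P) : IsFaceOf (normalCone P F) (normalCone P H) := by
  obtain ⟨f, hf⟩ := hF
  have : Nonempty H := ⟨⟨f, hFH hf⟩⟩
  refine ⟨⟨0, by simp [normalCone_eq_innerDual]⟩, by
    rw [normalCone_eq_innerDual]; exact (ProperCone.innerDual _).convex, ?_⟩
  rw [normalCone_eq_iInter hf hFH hHP]
  refine isExtreme_iInter fun ⟨h, hh⟩ => isExtreme_inter_setOf_inner_eq fun v hv => ?_
  have := hv f hf h (hHP hh)
  rwa [real_inner_comm] at this

end NormalCone

section NormalConeOfPolyhedron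

variable {d : ℕ} {ι : Type*} {u : ι → Euc d} {α : ι → ℝ}

theorem isFaceOf_minimalFace {x : Euc d} (hx : x ∈ polyhedron u α) :
    IsFaceOf (polyhedron u α) (minimalFace u α x) :=
  ⟨⟨x, mem_minimalFace_self hx⟩, convex_minimalFace x, isExtreme_minimalFace x⟩

theorem normalCone_eq_hull [Finite ι] {F : Set (Euc d)} (hF : IsFaceOf (polyhedron u α) F) :
    normalCone (polyhedron u α) F =
      PointedCone.hull ℝ (u '' {i | F ⊆ {x | ⟪u i, x⟫ = α i}}) := by
  obtain ⟨hne, hconv, hext⟩ := hF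
  refine subset_antisymm (fun v hv => ?_) (hull_subset_normalCone ?_)
  · by_contra hvG
    obtain ⟨w, hwG, hvw⟩ :=
      PointedCone.exists_inner_pos_of_notMem_hull ((Set.toFinite _).image u) hvG
    obtain ⟨f, hfF, hf⟩ := exists_mem_inner_eq_iff_subset hext.subset hconv hne
    obtain ⟨t, ht, hmem, -⟩ := exists_pos_add_smul_mem_polyhedron (hext.subset hfF)
      (w := w) fun i hi => hwG _ ⟨i, (hf i).1 hi, rfl⟩
    have := hv f hfF _ hmem
    rw [add_sub_cancel_left, real_inner_smul_right] at this
    exact (mul_pos ht hvw).not_ge this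
  · rintro _ ⟨i, hi, rfl⟩ f hf z hz
    rw [inner_sub_right, hi hf]
    linarith [hz i]

theorem exists_isFaceOf_eq_normalCone [Finite ι] {F S : Set (Euc d)}
    (hF : IsFaceOf (polyhedron u α) F) (hS : IsFaceOf (normalCone (polyhedron u α) F) S) :
    ∃ H, IsFaceOf (polyhedron u α) H ∧ F ⊆ H ∧ S = normalCone (polyhedron u α) H := by
  obtain ⟨hne, hconv, hext⟩ := hF
  obtain ⟨hSne, hSconv, hSext⟩ := hS
  rw [normalCone_eq_hull ⟨hne, hconv, hext⟩] at hSext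
  obtain ⟨S, rfl, hS⟩ := hSext.exists_isFaceOf hSne hSconv
  obtain ⟨w, hw⟩ := hS.exists_exposing_vector ((Set.toFinite _).image u)
  obtain ⟨f, hfF, hf⟩ := exists_mem_inner_eq_iff_subset hext.subset hconv hne
  obtain ⟨t, -, hmem, htight⟩ := exists_pos_add_smul_mem_polyhedron (hext.subset hfF)
    (w := w) fun i hi => (hw _ ⟨i, (hf i).1 hi, rfl⟩).1
  have hH := isFaceOf_minimalFace hmem
  have hgen : ∀ i, minimalFace u α (f + t • w) ⊆ {y | ⟪u i, y⟫ = α i} ↔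
      F ⊆ {y | ⟪u i, y⟫ = α i} ∧ u i ∈ S := fun i => by
    rw [minimalFace_subset_iff hmem, htight, hf]
    exact and_congr_right fun hi => hw _ ⟨i, hi, rfl⟩ |>.2
  refine ⟨_, hH, fun y hy => ⟨hext.subset hy, fun i hi => ?_⟩, ?_⟩
  · exact (hf i).1 ((htight i).1 hi).1 hy
  · have hgens : u '' {i | F ⊆ {y | ⟪u i, y⟫ = α i}} ∩ S =
        u '' {i | minimalFace u α (f + t • w) ⊆ {y | ⟪u i, y⟫ = α i}} := by
      simp only [hgen]
      ext v
      constructor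
      · rintro ⟨⟨i, hi, rfl⟩, hiS⟩; exact ⟨i, ⟨hi, hiS⟩, rfl⟩
      · rintro ⟨i, hi, rfl⟩; exact ⟨⟨i, hi.1, rfl⟩, hi.2⟩
    rw [normalCone_eq_hull hH, hS.eq_hull_inter, hgens]

end NormalConeOfPolyhedron

theorem posHullOf_eq_hull {d : ℕ} (A : Set (Euc d)) : posHullOf A = PointedCone.hull ℝ A := by
  ext x
  rw [SetLike.mem_coe, PointedCone.mem_hull_iff_exists_finset]
  exact exists₂_congr fun s c => and_congr_right' <| and_congr_right' eq_comm

theorem normalCone_pos_hull_of_facet_normals_general {d n : ℕ}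
    (u : Fin n → Euc d) (α : Fin n → ℝ)
    (P : Set (Euc d)) (hP : P = {x | ∀ i, ⟪u i, x⟫ ≤ α i})
    (F : Set (Euc d)) (hF : IsFaceOf P F) :
    normalCone P F =
      posHullOf {v | ∃ i, v = u i ∧ F ⊆ {x | ⟪u i, x⟫ = α i}} ∧
    (∀ S : Set (Euc d), IsFaceOf (normalCone P F) S ↔
      ∃ H : Set (Euc d), IsFaceOf P H ∧ F ⊆ H ∧ S = normalCone P H) := by
  change P = polyhedron u α at hP
  subst hP
  refine ⟨(normalCone_eq_hull hF).trans ?_, fun S => ⟨exists_isFaceOf_eq_normalCone hF, ?_⟩⟩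
  · rw [posHullOf_eq_hull]
    congr 2
    ext v
    simp only [Set.mem_image, Set.mem_ofPred_eq]
    exact exists_congr fun i => by rw [and_comm, eq_comm]
  · rintro ⟨H, hH, hFH, rfl⟩
    exact isFaceOf_normalCone hF.1 hFH hH.2.2.subset

theorem normalCone_pos_hull_of_facet_normals {d n : ℕ}
    (u : Fin n → Euc d) (α : Fin n → ℝ) (hu : ∀ i, ‖u i‖ = 1)
    (P : Set (Euc d)) (hP : P = {x | ∀ i, ⟪u i, x⟫ ≤ α i})
    (hfull : sdim P = d)
    (hfacet : ∀ i, sdim (P ∩ {x | ⟪u i, x⟫ = α i}) = d - 1)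
    (F : Set (Euc d)) (hF : IsFaceOf P F) :
    normalCone P F =
      posHullOf {v | ∃ i, v = u i ∧ F ⊆ {x | ⟪u i, x⟫ = α i}} ∧
    (∀ S : Set (Euc d), IsFaceOf (normalCone P F) S ↔
      ∃ H : Set (Euc d), IsFaceOf P H ∧ F ⊆ H ∧ S = normalCone P H) :=
  normalCone_pos_hull_of_facet_normals_general u α P hP F hF
end
end
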